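/- For every integer n ≥ 0, as ℂ-linear operators on R = ℂ[x₊,x₋,v,v̄,z,z̄] one has the identity I⁻ₙ = ½((n+2) I₃∘I₂ − (n+3) I₂∘I₃); that is, ((n+2)/2)(z∂₊ + ∂_v̄) − ½ I₂∘∂_z̄ = ½((n+2) ∂_z̄∘I₂ − (n+3) I₂∘∂_z̄). -/
import Mathlib


open MvPolynomial

lemma pderiv_comm' {σ : Type*} [DecidableEq σ] (i j : σ) (P : MvPolynomial σ ℂ) :
    pderiv i (pderiv j P) = pderiv j (pderiv i P) := by
  induction P using MvPolynomial.induction_on with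
  | C a => simp
  | add p q hp hq => simp [hp, hq]
  | mul_X p k hp =>
      simp only [pderiv_mul, pderiv_X, map_add, hp]
      by_cases h1 : k = i <;> by_cases h2 : k = j <;>
        simp [h1, h2, Pi.single_apply, pderiv_mul, pderiv_X,
          apply_ite (pderiv i), apply_ite (pderiv j)] <;> ring

/-- The ring `R = ℂ[x₊, x₋, v, v̄, z, z̄]`, with variables indexed as
`0 = x₊`, `1 = x₋`, `2 = v`, `3 = v̄`, `4 = z`, `5 = z̄`. -/
abbrev R6 : Type := MvPolynomial (Fin 6) ℂ

/-- `I₂ = z̄z∂₊ + z∂_v + z̄∂_v̄ + ∂₋`. -/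
noncomputable def I2 (P : R6) : R6 :=
  X 5 * X 4 * pderiv 0 P + X 4 * pderiv 2 P + X 5 * pderiv 3 P + pderiv 1 P

/-- `I⁻ₙ = ((n+2)/2)(z∂₊ + ∂_v̄) − ½ I₂∘∂_z̄`. -/
noncomputable def Iminus (n : ℕ) (P : R6) : R6 :=
  (((n : ℂ) + 2) / 2) • (X 4 * pderiv 0 P + pderiv 3 P)
    - (1 / 2 : ℂ) • I2 (pderiv 5 P)

/-- `I⁻ₙ = ½((n+2) I₃∘I₂ − (n+3) I₂∘I₃)` where `I₃ = ∂_z̄`. -/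
theorem Iminus_eq_half_commutator_combination (n : ℕ) (P : R6) :
    Iminus n P
      = (1 / 2 : ℂ) • (((n : ℂ) + 2) • pderiv 5 (I2 P)
          - ((n : ℂ) + 3) • I2 (pderiv 5 P)) := by
  have h5 : pderiv 5 (I2 P) = I2 (pderiv 5 P) + (X 4 * pderiv 0 P + pderiv 3 P) := by
    simp only [I2, map_add, pderiv_mul, pderiv_X_self, mul_one]
    rw [pderiv_comm' 5 0 P, pderiv_comm' 5 2 P, pderiv_comm' 5 3 P, pderiv_comm' 5 1 P]
    simp [pderiv_X_of_ne]
    ring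
  rw [Iminus, h5]
  module
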